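/- arXiv:1707.07967 — 2 statements merged into one kernel-verified Lean document; each statement's English description precedes it below -/
import Mathlib

section
/- Let (X,u) be a classical solution of the coupled ODE–heat system, with in addition ∂ₜₓu continuous. Then for all t > 0, d/dt ∫₀¹ (∂ₓu(x,t))² dx = −(2/γ) ∫₀¹ (∂ₜu(x,t))² dx − 2 ∂ₓu(0,t) · C (A X(t) + B u(1,t)). -/
/-!
Differentiating under the integral sign gives `2 ∫₀¹ ∂ₓu ∂ₜₓu`. Since `∂ₜₓu` is continuous it is
also `∂ₓ∂ₜu`, so integrating by parts in `x` turns this into boundary terms minus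
`2 ∫₀¹ ∂ₓₓu ∂ₜu`. The heat equation rewrites the integrand as `(∂ₜu)² / γ`, the Neumann condition
kills the boundary term at `x = 1`, and at `x = 0` differentiating the Dirichlet condition
`u(0,·) = C X` along the ODE gives `∂ₜu(0,t) = C (A X(t) + B u(1,t))`.
-/

open Matrix Metric Set intervalIntegral

section ParametricIntegral

variable {E : Type*} [NormedAddCommGroup E] [NormedSpace ℝ E]

theorem hasDerivAt_intervalIntegral_of_continuous {f f' : ℝ → ℝ → E}
    (hf : ∀ x s, HasDerivAt (f x) (f' x s) s)
    (hfc : Continuous fun p : ℝ × ℝ => f p.1 p.2) (hf'c : Continuous fun p : ℝ × ℝ => f' p.1 p.2)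
    (a b t : ℝ) :
    HasDerivAt (fun s => ∫ x in a..b, f x s) (∫ x in a..b, f' x t) t := by
  obtain ⟨M, hM⟩ := (isCompact_uIcc.prod (isCompact_closedBall t 1)).exists_bound_of_continuousOn
    hf'c.continuousOn
  refine (hasDerivAt_integral_of_dominated_loc_of_deriv_le (F' := fun s x => f' x s)
    (closedBall_mem_nhds t one_pos) (.of_forall fun s => (hfc.uncurry_right s).aestronglyMeasurable)
    ((hfc.uncurry_right t).intervalIntegrable a b) (hf'c.uncurry_right t).aestronglyMeasurable
    (.of_forall fun x hx s hs => hM (x, s) ⟨uIoc_subset_uIcc hx, hs⟩)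
    intervalIntegrable_const (.of_forall fun x _ s _ => hf x s)).2

theorem hasDerivAt_swap_of_continuous_mixed [CompleteSpace E] {u ut ux utx : ℝ → ℝ → E}
    (hut : ∀ x t, HasDerivAt (u x) (ut x t) t)
    (hux : ∀ x t, HasDerivAt (fun y => u y t) (ux x t) x)
    (hutx : ∀ x t, HasDerivAt (ux x) (utx x t) t)
    (huxc : Continuous fun p : ℝ × ℝ => ux p.1 p.2)
    (hutxc : Continuous fun p : ℝ × ℝ => utx p.1 p.2) (x t : ℝ) :
    HasDerivAt (fun y => ut y t) (utx x t) x := by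
  -- both sides are the `t`-derivative of `u y t - u 0 t = ∫ z in 0..y, ux z t`
  have hftc : ∀ y, ut y t = ut 0 t + ∫ z in 0..y, utx z t := fun y => by
    have hu : (fun s => u y s - u 0 s) = fun s => ∫ z in 0..y, ux z s := funext fun s =>
      (integral_eq_sub_of_hasDerivAt (fun z _ => hux z s)
        ((huxc.uncurry_right s).intervalIntegrable 0 y)).symm
    have hderiv := (hut y t).fun_sub (hut 0 t)
    rw [hu] at hderiv
    rw [← hderiv.unique (hasDerivAt_intervalIntegral_of_continuous hutx huxc hutxc 0 y t)]
    abel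
  rw [funext hftc]
  exact ((hutxc.uncurry_right t).integral_hasStrictDerivAt 0 x).hasDerivAt.const_add _

end ParametricIntegral

theorem integral_mul_eq_inv_mul_integral_sq {f g : ℝ → ℝ} {a b γ : ℝ} (hab : a ≤ b)
    (h : ∀ x ∈ Ioo a b, g x = γ * f x) :
    ∫ x in a..b, f x * g x = γ⁻¹ * ∫ x in a..b, g x ^ 2 := by
  simp only [integral_of_le hab, MeasureTheory.integral_Ioc_eq_integral_Ioo,
    ← MeasureTheory.integral_const_mul]
  refine MeasureTheory.setIntegral_congr_fun measurableSet_Ioo fun x hx => ?_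
  rw [h x hx]
  rcases eq_or_ne γ 0 with rfl | hγ
  · simp
  · field_simp

theorem hasDerivAt_mulVec_apply {m n : Type*} [Fintype n] (C : Matrix m n ℝ) (i : m)
    {X : ℝ → n → ℝ} {v : n → ℝ} {t : ℝ} (hX : HasDerivAt X v t) :
    HasDerivAt (fun s => (C *ᵥ X s) i) ((C *ᵥ v) i) t := by
  simp only [mulVec, dotProduct]
  exact .fun_sum fun j _ => (hasDerivAt_pi.mp hX j).const_mul (C i j)

theorem h1_energy_derivative_general {n : ℕ} (A : Matrix (Fin n) (Fin n) ℝ)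
    (B : Matrix (Fin n) (Fin 1) ℝ) (C : Matrix (Fin 1) (Fin n) ℝ)
    (γ : ℝ)
    (X : ℝ → Fin n → ℝ) (u ut ux uxx utx : ℝ → ℝ → ℝ)
    (hODE : ∀ t > (0:ℝ), HasDerivAt X (A.mulVec (X t) + fun i => B i 0 * u 1 t) t)
    (hut : ∀ x t, HasDerivAt (fun s => u x s) (ut x t) t)
    (hux : ∀ x t, HasDerivAt (fun y => u y t) (ux x t) x)
    (huxx : ∀ x t, HasDerivAt (fun y => ux y t) (uxx x t) x)
    (hutx : ∀ x t, HasDerivAt (fun s => ux x s) (utx x t) t)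
    (huxc : Continuous fun p : ℝ × ℝ => ux p.1 p.2)
    (huxxc : Continuous fun p : ℝ × ℝ => uxx p.1 p.2)
    (hutxc : Continuous fun p : ℝ × ℝ => utx p.1 p.2)
    (hheat : ∀ t > (0:ℝ), ∀ x ∈ Set.Ioo (0:ℝ) 1, ut x t = γ * uxx x t)
    (hdir : ∀ t > (0:ℝ), u 0 t = C.mulVec (X t) 0)
    (hneu : ∀ t > (0:ℝ), ux 1 t = 0)
    (t : ℝ) (ht : 0 < t) :
    deriv (fun s => ∫ x in (0:ℝ)..1, (ux x s) ^ 2) t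
      = -(2 / γ) * (∫ x in (0:ℝ)..1, (ut x t) ^ 2)
        - 2 * ux 0 t * C.mulVec (A.mulVec (X t) + fun i => B i 0 * u 1 t) 0 := by
  have henergy : HasDerivAt (fun s => ∫ x in (0:ℝ)..1, ux x s ^ 2)
      (∫ x in (0:ℝ)..1, 2 * (ux x t * utx x t)) t :=
    hasDerivAt_intervalIntegral_of_continuous (f' := fun x s => 2 * (ux x s * utx x s))
      (fun x s => ((hutx x s).fun_pow 2).congr_deriv (by ring))
      (huxc.pow 2) (continuous_const.mul (huxc.mul hutxc)) 0 1 t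
  have hparts : ∫ x in (0:ℝ)..1, ux x t * utx x t
      = ux 1 t * ut 1 t - ux 0 t * ut 0 t - ∫ x in (0:ℝ)..1, uxx x t * ut x t :=
    integral_mul_deriv_eq_deriv_mul (fun x _ => huxx x t)
      (fun x _ => hasDerivAt_swap_of_continuous_mixed hut hux hutx huxc hutxc x t)
      ((huxxc.uncurry_right t).intervalIntegrable 0 1)
      ((hutxc.uncurry_right t).intervalIntegrable 0 1)
  have hut0 : ut 0 t = (C *ᵥ (A *ᵥ X t + fun i => B i 0 * u 1 t)) 0 :=
    (hut 0 t).unique <| (hasDerivAt_mulVec_apply C 0 (hODE t ht)).congr_of_eventuallyEq <|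
      (lt_mem_nhds ht).mono hdir
  rw [henergy.deriv, integral_const_mul, hparts,
    integral_mul_eq_inv_mul_integral_sq zero_le_one (hheat t ht), hneu t ht, hut0]
  ring

/-- along a classical solution `(X,u)` of the coupled ODE–heat system with
`∂ₜₓu` continuous,
`d/dt ∫₀¹ (∂ₓu)² dx = −(2/γ) ∫₀¹ (∂ₜu)² dx − 2 ∂ₓu(0,t) C(A X(t) + B u(1,t))`. -/
theorem h1_energy_derivative {n : ℕ} (A : Matrix (Fin n) (Fin n) ℝ)
    (B : Matrix (Fin n) (Fin 1) ℝ) (C : Matrix (Fin 1) (Fin n) ℝ)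
    (γ : ℝ) (hγ : 0 < γ)
    (X : ℝ → Fin n → ℝ) (u ut ux uxx utx : ℝ → ℝ → ℝ)
    (hX : ContDiff ℝ 1 X)
    (hODE : ∀ t > (0:ℝ), HasDerivAt X (A.mulVec (X t) + fun i => B i 0 * u 1 t) t)
    (hut : ∀ x t, HasDerivAt (fun s => u x s) (ut x t) t)
    (hux : ∀ x t, HasDerivAt (fun y => u y t) (ux x t) x)
    (huxx : ∀ x t, HasDerivAt (fun y => ux y t) (uxx x t) x)
    (hutx : ∀ x t, HasDerivAt (fun s => ux x s) (utx x t) t)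
    (hutc : Continuous fun p : ℝ × ℝ => ut p.1 p.2)
    (huxc : Continuous fun p : ℝ × ℝ => ux p.1 p.2)
    (huxxc : Continuous fun p : ℝ × ℝ => uxx p.1 p.2)
    (hutxc : Continuous fun p : ℝ × ℝ => utx p.1 p.2)
    (hheat : ∀ t > (0:ℝ), ∀ x ∈ Set.Ioo (0:ℝ) 1, ut x t = γ * uxx x t)
    (hdir : ∀ t > (0:ℝ), u 0 t = C.mulVec (X t) 0)
    (hneu : ∀ t > (0:ℝ), ux 1 t = 0)
    (t : ℝ) (ht : 0 < t) :
    deriv (fun s => ∫ x in (0:ℝ)..1, (ux x s) ^ 2) t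
      = -(2 / γ) * (∫ x in (0:ℝ)..1, (ut x t) ^ 2)
        - 2 * ux 0 t * C.mulVec (A.mulVec (X t) + fun i => B i 0 * u 1 t) 0 :=
  h1_energy_derivative_general A B C γ X u ut ux uxx utx hODE hut hux huxx hutx huxc huxxc hutxc
    hheat hdir hneu t ht
end

section
/- (Bessel bound for the time derivative in projected coordinates) Let u : [0,1] × [0,∞) → ℝ have continuous partial derivatives ∂ₜu, ∂ₓu, ∂ₓₓu, satisfy ∂ₜu = γ∂ₓₓu on (0,1) with ∂ₓu(1,t) = 0 for some γ > 0, and let N ∈ ℕ and t > 0. Then ∫₀¹ (∂ₜu(x,t))² dx ≥ γ² Σ_{k=0}^{N+2} (2k+1) · m_k(t)², where m_0(t) = −∂ₓu(0,t), m_1(t) = 2u(0,t) − 2u(1,t) + ∂ₓu(0,t), and for k ≥ 2, m_k(t) = Σ_{j=1}^{k−1} Σ_{i=0}^{j−1} ℓ_{kj} ℓ_{ji} ⟨u(·,t), L_i⟩ + u(0,t)·Σ_{j=0}^{k−1} ℓ_{kj}(−1)^j − u(1,t)·Σ_{j=0}^{k−1} ℓ_{kj} − (−1)^k ∂ₓu(0,t).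 -/
/-!
Since `∂ₜu(·,t) = γ ∂ₓₓu(·,t)`, the Legendre coefficients of `∂ₜu(·,t)` are `γ ⟨∂ₓₓu(·,t), L_k⟩`,
and the bound is Bessel's inequality for the orthogonal family `L_k`, `‖L_k‖² = 1/(2k+1)`.
Integrating by parts twice, with `L_k(1) = 1`, `L_k(0) = (-1)^k`, `∂ₓu(1,t) = 0` and
`L_k' = Σ_{j<k} ℓ_{kj} L_j`, turns `⟨∂ₓₓu(·,t), L_k⟩` into `m_k(t)`.

The facts about `L_k` come from Rodrigues' formula: `k` integrations by parts against
`(x² - x)^k` make `L_k` orthogonal to all polynomials of degree `< k` and reduce `‖L_k‖²` to a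
Beta integral; `ℓ_{kj}` is then read off from `⟨L_k', L_j⟩ = [L_k L_j]₀¹ = 1 - (-1)^{k+j}`.
-/

/-- The shifted Legendre polynomial on `[0,1]`: `L_k(x) = (1/k!) dᵏ/dxᵏ [(x² - x)ᵏ]`. -/
noncomputable def shiftedLegendre (k : ℕ) : ℝ → ℝ :=
  fun x => (1 / (Nat.factorial k : ℝ)) * iteratedDeriv k (fun y => (y ^ 2 - y) ^ k) x

/-- `ℓ_{kj} = (2j+1)(1−(−1)^{k+j})` if `j ≤ k−1`, and `ℓ_{kj} = 0` if `j ≥ k`. -/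
noncomputable def ell (k j : ℕ) : ℝ :=
  if j < k then (2 * (j : ℝ) + 1) * (1 - (-1 : ℝ) ^ (k + j)) else 0

open Polynomial Finset MeasureTheory
open scoped Nat

/-- Mathlib's `Polynomial.shiftedLegendre` is normalised by Rodrigues' formula for
`Xᵏ (1 - X)ᵏ` rather than `(X² - X)ᵏ`, hence the sign. -/
noncomputable def legendrePoly (k : ℕ) : ℝ[X] :=
  C ((-1) ^ k) * (Polynomial.shiftedLegendre k).map (algebraMap ℤ ℝ)

theorem factorial_mul_legendrePoly (k : ℕ) :
    (k ! : ℝ[X]) * legendrePoly k = derivative^[k] ((X ^ 2 - X) ^ k) := by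
  have h := congrArg (Polynomial.map (algebraMap ℤ ℝ)) (factorial_mul_shiftedLegendre_eq k)
  simp only [Polynomial.map_mul, Polynomial.map_natCast, ← iterate_derivative_map,
    Polynomial.map_pow, Polynomial.map_sub, Polynomial.map_one, map_X] at h
  have hW : (X ^ 2 - X : ℝ[X]) ^ k = C ((-1) ^ k) * (X ^ k * (1 - X) ^ k) := by
    rw [← mul_pow, C_pow, map_neg, map_one, ← mul_pow]; ring
  rw [hW, iterate_derivative_C_mul, ← h, legendrePoly]; ring

theorem legendrePoly_eq (k : ℕ) :
    legendrePoly k = C (k ! : ℝ)⁻¹ * derivative^[k] ((X ^ 2 - X) ^ k) := by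
  rw [← factorial_mul_legendrePoly, ← mul_assoc, ← C_eq_natCast, ← C_mul,
    inv_mul_cancel₀ (by positivity), C_1, one_mul]

theorem Polynomial.iteratedDeriv_eval (p : ℝ[X]) (n : ℕ) :
    iteratedDeriv n (fun x => p.eval x) = fun x => (derivative^[n] p).eval x := by
  induction n with
  | zero => simp
  | succ n ih =>
    ext x
    rw [iteratedDeriv_succ, ih, Function.iterate_succ_apply', Polynomial.deriv]

theorem shiftedLegendre_eq_eval (k : ℕ) (x : ℝ) :
    shiftedLegendre k x = (legendrePoly k).eval x := by
  have hW : (fun y : ℝ => (y ^ 2 - y) ^ k) = fun y => ((X ^ 2 - X : ℝ[X]) ^ k).eval y := by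
    simp
  rw [_root_.shiftedLegendre, hW, iteratedDeriv_eval, legendrePoly_eq]
  simp

theorem coeff_legendrePoly_self (k : ℕ) : (legendrePoly k).coeff k = (2 * k).choose k := by
  rw [legendrePoly, coeff_C_mul, coeff_map, coeff_shiftedLegendre, Nat.choose_self, two_mul]
  simp [← mul_assoc, ← mul_pow]

theorem natDegree_legendrePoly (k : ℕ) : (legendrePoly k).natDegree = k := by
  rw [legendrePoly, natDegree_C_mul (by simp),
    natDegree_map_eq_of_injective ((algebraMap ℤ ℝ).injective_int), natDegree_shiftedLegendre]

theorem legendrePoly_ne_zero (k : ℕ) : legendrePoly k ≠ 0 := by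
  intro h
  have h0 := coeff_legendrePoly_self k
  rw [h, coeff_zero, eq_comm, Nat.cast_eq_zero] at h0
  exact (Nat.choose_pos (by omega)).ne' h0

theorem degree_legendrePoly (k : ℕ) : (legendrePoly k).degree = k := by
  rw [degree_eq_natDegree (legendrePoly_ne_zero k), natDegree_legendrePoly]

theorem legendrePoly_eval_zero (k : ℕ) : (legendrePoly k).eval 0 = (-1) ^ k := by
  simp [legendrePoly, ← coeff_zero_eq_eval_zero, coeff_shiftedLegendre]

theorem legendrePoly_eval_one (k : ℕ) : (legendrePoly k).eval 1 = 1 := by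
  have h := shiftedLegendre_eval_symm k (1 : ℝ)
  simp only [sub_self, aeval_def, eval₂_eq_eval_map] at h
  have h0 := legendrePoly_eval_zero k
  simp only [legendrePoly, eval_mul, eval_C] at h0 ⊢
  rw [h, ← mul_assoc, ← mul_pow]
  simpa using h0

theorem integral_deriv_mul_eval {a b : ℝ} {f f' : ℝ → ℝ}
    (hf : ∀ x ∈ Set.uIcc a b, HasDerivAt f (f' x) x) (hf' : IntervalIntegrable f' volume a b)
    (p : ℝ[X]) :
    ∫ x in a..b, f' x * p.eval x =
      f b * p.eval b - f a * p.eval a - ∫ x in a..b, f x * (derivative p).eval x := by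
  have h := intervalIntegral.integral_mul_deriv_eq_deriv_mul (fun x _ => p.hasDerivAt x) hf
    ((derivative p).continuous.intervalIntegrable a b) hf'
  simp only [mul_comm (f' _), mul_comm (f _)] at h ⊢
  rw [h]

theorem integral_mul_iterate_derivative {a b : ℝ} {p : ℝ[X]} {k : ℕ}
    (hp : ∀ i < k, (derivative^[i] p).eval a = 0 ∧ (derivative^[i] p).eval b = 0) (q : ℝ[X]) :
    ∫ x in a..b, q.eval x * (derivative^[k] p).eval x =
      (-1) ^ k * ∫ x in a..b, (derivative^[k] q).eval x * p.eval x := by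
  induction k generalizing q with
  | zero => simp [mul_comm]
  | succ k ih =>
    obtain ⟨ha, hb⟩ := hp k k.lt_succ_self
    have hibp := integral_deriv_mul_eval (fun x _ => (derivative^[k] p).hasDerivAt x)
      ((derivative (derivative^[k] p)).continuous.intervalIntegrable a b) q
    calc ∫ x in a..b, q.eval x * (derivative^[k + 1] p).eval x
        = -∫ x in a..b, (derivative q).eval x * (derivative^[k] p).eval x := by
          simp only [Function.iterate_succ_apply', mul_comm (q.eval _), hibp, ha, hb]
          simp [mul_comm]
      _ = (-1) ^ (k + 1) * ∫ x in a..b, (derivative^[k + 1] q).eval x * p.eval x := by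
          rw [ih (fun i hi => hp i (by omega)), Function.iterate_succ_apply]
          ring

theorem integral_mul_legendrePoly (q : ℝ[X]) (k : ℕ) :
    ∫ x in (0 : ℝ)..1, q.eval x * (legendrePoly k).eval x =
      (-1) ^ k / k ! *
        ∫ x in (0 : ℝ)..1, (derivative^[k] q).eval x * ((X ^ 2 - X : ℝ[X]) ^ k).eval x := by
  have hroots : ∀ i < k, (derivative^[i] ((X ^ 2 - X : ℝ[X]) ^ k)).eval 0 = 0 ∧
      (derivative^[i] ((X ^ 2 - X : ℝ[X]) ^ k)).eval 1 = 0 := by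
    intro i hi
    obtain ⟨r, hr⟩ := pow_sub_dvd_iterate_derivative_pow (X ^ 2 - X : ℝ[X]) k i
    have hki : k - i ≠ 0 := by omega
    simp [hr, zero_pow hki]
  simp only [legendrePoly_eq, eval_mul, eval_C, mul_left_comm (q.eval _),
    intervalIntegral.integral_const_mul, integral_mul_iterate_derivative hroots]
  ring

theorem integral_mul_legendrePoly_eq_zero {q : ℝ[X]} {k : ℕ} (hq : q.natDegree < k) :
    ∫ x in (0 : ℝ)..1, q.eval x * (legendrePoly k).eval x = 0 := by
  simp [integral_mul_legendrePoly, iterate_derivative_eq_zero hq]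

theorem integral_pow_mul_one_sub_pow (m n : ℕ) :
    ∫ x in (0 : ℝ)..1, x ^ m * (1 - x) ^ n = m ! * n ! / (m + n + 1)! := by
  induction n generalizing m with
  | zero =>
    simp only [pow_zero, mul_one, integral_pow, one_pow, ne_eq, Nat.add_eq_zero_iff, one_ne_zero,
      and_false, not_false_eq_true, zero_pow, sub_zero, Nat.factorial_zero, Nat.cast_one, add_zero,
      Nat.factorial_succ, Nat.cast_mul, Nat.cast_add]
    field_simp
  | succ n ih =>
    have hsplit : ∀ x : ℝ,
        x ^ m * (1 - x) ^ (n + 1) = x ^ m * (1 - x) ^ n - x ^ (m + 1) * (1 - x) ^ n :=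
      fun x => by ring
    simp only [hsplit]
    rw [intervalIntegral.integral_sub (by apply Continuous.intervalIntegrable; fun_prop)
      (by apply Continuous.intervalIntegrable; fun_prop), ih, ih]
    rw [show m + 1 + n + 1 = m + n + 1 + 1 by omega, show m + (n + 1) + 1 = m + n + 1 + 1 by omega]
    simp only [Nat.factorial_succ]
    push_cast
    field_simp
    ring

theorem iterate_derivative_legendrePoly_self (k : ℕ) :
    derivative^[k] (legendrePoly k) = C (k ! * (2 * k).choose k : ℝ) := by
  ext m
  rw [coeff_iterate_derivative, coeff_C]
  rcases Nat.eq_zero_or_pos m with rfl | hm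
  · simp [Nat.descFactorial_self, coeff_legendrePoly_self]
  · rw [coeff_eq_zero_of_natDegree_lt (by rw [natDegree_legendrePoly]; omega), if_neg hm.ne']
    simp

theorem integral_legendrePoly_mul_self (k : ℕ) :
    ∫ x in (0 : ℝ)..1, (legendrePoly k).eval x * (legendrePoly k).eval x = 1 / (2 * k + 1) := by
  have hW : ∀ x : ℝ, ((X ^ 2 - X : ℝ[X]) ^ k).eval x = (-1) ^ k * (x ^ k * (1 - x) ^ k) := by
    intro x
    rw [← mul_pow, ← mul_pow]
    simp only [eval_pow, eval_sub, eval_X]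
    ring
  simp only [integral_mul_legendrePoly, iterate_derivative_legendrePoly_self, eval_C, hW,
    intervalIntegral.integral_const_mul, integral_pow_mul_one_sub_pow]
  have hchoose : ((2 * k).choose k * k ! * k ! : ℝ) = (2 * k)! := by
    rw [two_mul]; exact_mod_cast Nat.add_choose_mul_factorial_mul_factorial k k
  have hsucc : ((k + k + 1)! : ℝ) = (2 * k + 1) * (2 * k)! := by
    rw [← two_mul, Nat.factorial_succ]; push_cast; ring
  have hsign : ((-1 : ℝ) ^ k) * (-1) ^ k = 1 := by rw [← mul_pow]; norm_num
  have hpos : ((2 * k).choose k : ℝ) ≠ 0 := by exact_mod_cast (Nat.choose_pos (by omega)).ne'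
  rw [hsucc, ← hchoose]
  field_simp
  linear_combination hsign

theorem integral_legendrePoly_mul_legendrePoly (i j : ℕ) :
    ∫ x in (0 : ℝ)..1, (legendrePoly i).eval x * (legendrePoly j).eval x =
      if i = j then 1 / (2 * (i : ℝ) + 1) else 0 := by
  rcases lt_trichotomy i j with h | rfl | h
  · rw [if_neg h.ne, integral_mul_legendrePoly_eq_zero (by rwa [natDegree_legendrePoly])]
  · rw [if_pos rfl, integral_legendrePoly_mul_self]
  · simp only [if_neg h.ne', mul_comm ((legendrePoly i).eval _)]
    exact integral_mul_legendrePoly_eq_zero (by rwa [natDegree_legendrePoly])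

theorem integral_mul_sum_smul_legendrePoly {g : ℝ → ℝ} (hg : IntervalIntegrable g volume 0 1)
    (c : ℕ → ℝ) (n : ℕ) :
    ∫ x in (0 : ℝ)..1, g x * (∑ j ∈ range n, c j • legendrePoly j).eval x =
      ∑ j ∈ range n, c j * ∫ x in (0 : ℝ)..1, g x * (legendrePoly j).eval x := by
  simp only [eval_finsetSum, eval_smul, smul_eq_mul, mul_sum, mul_left_comm (g _)]
  rw [intervalIntegral.integral_finsetSum fun j _ =>
    (hg.mul_continuousOn (legendrePoly j).continuous.continuousOn).const_mul (c j)]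
  simp only [intervalIntegral.integral_const_mul]

theorem integral_sum_smul_legendrePoly_mul_legendrePoly (c : ℕ → ℝ) {i n : ℕ} (hi : i < n) :
    ∫ x in (0 : ℝ)..1, (∑ j ∈ range n, c j • legendrePoly j).eval x * (legendrePoly i).eval x =
      c i / (2 * i + 1) := by
  simp only [mul_comm _ ((legendrePoly i).eval _),
    integral_mul_sum_smul_legendrePoly ((legendrePoly i).continuous.intervalIntegrable 0 1),
    integral_legendrePoly_mul_legendrePoly, mul_ite, mul_zero, sum_ite_eq, mem_range, if_pos hi]
  ring

theorem exists_sum_smul_legendrePoly_eq {p : ℝ[X]} {n : ℕ} (hp : p.degree < n) :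
    ∃ c : ℕ → ℝ, ∑ j ∈ range n, c j • legendrePoly j = p := by
  let S : Sequence ℝ := ⟨legendrePoly, degree_legendrePoly⟩
  have hspan := S.span_degreeLT (m := n) fun i _ =>
    isUnit_iff_ne_zero.mpr (leadingCoeff_ne_zero.mpr (legendrePoly_ne_zero i))
  have hmem : p ∈ degreeLT ℝ n := mem_degreeLT.mpr hp
  rw [← hspan, ← coe_range] at hmem
  exact (Submodule.mem_span_image_finset_iff_exists_fun' ℝ).mp hmem

theorem derivative_legendrePoly (k : ℕ) :
    derivative (legendrePoly k) = ∑ j ∈ range k, ell k j • legendrePoly j := by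
  obtain ⟨c, hc⟩ := exists_sum_smul_legendrePoly_eq (p := derivative (legendrePoly k)) (n := k)
    (by simpa [degree_legendrePoly] using degree_derivative_lt (legendrePoly_ne_zero k))
  rw [← hc]
  refine sum_congr rfl fun i hi => ?_
  have hi : i < k := mem_range.mp hi
  have hcoeff := integral_sum_smul_legendrePoly_mul_legendrePoly c hi
  rw [hc, integral_deriv_mul_eval (fun x _ => (legendrePoly k).hasDerivAt x)
    ((derivative _).continuous.intervalIntegrable 0 1)] at hcoeff
  have hlow : ∫ x in (0 : ℝ)..1,
      (legendrePoly k).eval x * (derivative (legendrePoly i)).eval x = 0 := by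
    simp only [mul_comm ((legendrePoly k).eval _)]
    refine integral_mul_legendrePoly_eq_zero ?_
    have := natDegree_derivative_le (legendrePoly i)
    rw [natDegree_legendrePoly] at this
    omega
  simp only [hlow, legendrePoly_eval_one, legendrePoly_eval_zero] at hcoeff
  rw [ell, if_pos hi, pow_add]
  congr 1
  field_simp at hcoeff
  linarith

theorem sum_sq_integral_mul_legendrePoly_le {f : ℝ → ℝ} (hf : Continuous f) (n : ℕ) :
    ∑ k ∈ range n, (2 * k + 1) * (∫ x in (0 : ℝ)..1, f x * (legendrePoly k).eval x) ^ 2 ≤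
      ∫ x in (0 : ℝ)..1, f x ^ 2 := by
  set c : ℕ → ℝ := fun k => ∫ x in (0 : ℝ)..1, f x * (legendrePoly k).eval x
  set G := ∑ k ∈ range n, ((2 * k + 1) * c k) • legendrePoly k with hG
  have hfG : ∫ x in (0 : ℝ)..1, f x * G.eval x = ∑ k ∈ range n, (2 * k + 1) * c k ^ 2 := by
    rw [hG, integral_mul_sum_smul_legendrePoly (hf.intervalIntegrable 0 1)]
    exact sum_congr rfl fun k _ => by ring
  have hGG : ∫ x in (0 : ℝ)..1, G.eval x * G.eval x = ∑ k ∈ range n, (2 * k + 1) * c k ^ 2 := by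
    nth_rewrite 2 [hG]
    rw [integral_mul_sum_smul_legendrePoly (G.continuous.intervalIntegrable 0 1)]
    refine sum_congr rfl fun k hk => ?_
    rw [hG, integral_sum_smul_legendrePoly_mul_legendrePoly _ (mem_range.mp hk)]
    field_simp
  have hexpand : ∫ x in (0 : ℝ)..1, (f x - G.eval x) ^ 2 =
      (∫ x in (0 : ℝ)..1, f x ^ 2) - 2 * (∫ x in (0 : ℝ)..1, f x * G.eval x) +
        ∫ x in (0 : ℝ)..1, G.eval x * G.eval x := by
    have hsq : ∀ x,
        (f x - G.eval x) ^ 2 = f x ^ 2 - 2 * (f x * G.eval x) + G.eval x * G.eval x :=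
      fun x => by ring
    simp only [hsq]
    rw [intervalIntegral.integral_add, intervalIntegral.integral_sub,
      intervalIntegral.integral_const_mul] <;>
    apply Continuous.intervalIntegrable <;> fun_prop
  have hnonneg : 0 ≤ ∫ x in (0 : ℝ)..1, (f x - G.eval x) ^ 2 :=
    intervalIntegral.integral_nonneg zero_le_one fun x _ => sq_nonneg _
  linarith

theorem integral_deriv_mul_legendrePoly {f f' : ℝ → ℝ}
    (hf : ∀ x ∈ Set.uIcc (0 : ℝ) 1, HasDerivAt f (f' x) x)
    (hf' : IntervalIntegrable f' volume 0 1) (k : ℕ) :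
    ∫ x in (0 : ℝ)..1, f' x * (legendrePoly k).eval x =
      f 1 - (-1) ^ k * f 0 -
        ∑ j ∈ range k, ell k j * ∫ x in (0 : ℝ)..1, f x * (legendrePoly j).eval x := by
  have hfi : IntervalIntegrable f volume 0 1 :=
    ContinuousOn.intervalIntegrable fun x hx => (hf x hx).continuousAt.continuousWithinAt
  rw [integral_deriv_mul_eval hf hf', derivative_legendrePoly,
    integral_mul_sum_smul_legendrePoly hfi, legendrePoly_eval_one, legendrePoly_eval_zero]
  ring

/-- The paper's `m_k(t)`, with `v = u(·,t)` and `d = ∂ₓu(0,t)`. -/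
noncomputable def legendreMoment (v : ℝ → ℝ) (d : ℝ) (k : ℕ) : ℝ :=
  if k = 0 then -d
  else if k = 1 then 2 * v 0 - 2 * v 1 + d
  else (∑ j ∈ Ico 1 k, ∑ i ∈ range j,
          ell k j * ell j i * ∫ x in (0 : ℝ)..1, v x * _root_.shiftedLegendre i x)
    + v 0 * (∑ j ∈ range k, ell k j * (-1 : ℝ) ^ j)
    - v 1 * (∑ j ∈ range k, ell k j)
    - (-1 : ℝ) ^ k * d

theorem legendreMoment_eq (v : ℝ → ℝ) (d : ℝ) (k : ℕ) :
    legendreMoment v d k = -((-1) ^ k * d) - ∑ j ∈ range k, ell k j *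
      (v 1 - (-1) ^ j * v 0 -
        ∑ i ∈ range j, ell j i * ∫ x in (0 : ℝ)..1, v x * (legendrePoly i).eval x) := by
  rcases k with _ | _ | k
  · simp [legendreMoment]
  · simp [legendreMoment, ell]
    ring
  · have hIco : ∀ F : ℕ → ℝ, F 0 = 0 →
        ∑ j ∈ Ico 1 (k + 2), F j = ∑ j ∈ range (k + 2), F j := by
      intro F hF
      rw [range_eq_Ico, sum_eq_sum_Ico_succ_bot (by omega : 0 < k + 2), hF, zero_add]
    rw [legendreMoment, if_neg (by omega), if_neg (by omega), hIco _ (by simp)]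
    simp only [shiftedLegendre_eq_eval, mul_sub, sum_sub_distrib, mul_sum, mul_assoc]
    ring_nf

theorem integral_second_deriv_mul_legendrePoly {f f' f'' : ℝ → ℝ}
    (hf : ∀ x ∈ Set.uIcc (0 : ℝ) 1, HasDerivAt f (f' x) x)
    (hf' : ∀ x ∈ Set.uIcc (0 : ℝ) 1, HasDerivAt f' (f'' x) x)
    (hf'' : IntervalIntegrable f'' volume 0 1) (hf'_one : f' 1 = 0) (k : ℕ) :
    ∫ x in (0 : ℝ)..1, f'' x * (legendrePoly k).eval x = legendreMoment f (f' 0) k := by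
  have hf'i : IntervalIntegrable f' volume 0 1 :=
    ContinuousOn.intervalIntegrable fun x hx => (hf' x hx).continuousAt.continuousWithinAt
  simp only [integral_deriv_mul_legendrePoly hf' hf'', integral_deriv_mul_legendrePoly hf hf'i,
    hf'_one, legendreMoment_eq]
  ring

theorem bessel_time_derivative_general (γ : ℝ)
    (u ut ux uxx : ℝ → ℝ → ℝ)
    (hux : ∀ x t, HasDerivAt (fun y => u y t) (ux x t) x)
    (huxx : ∀ x t, HasDerivAt (fun y => ux y t) (uxx x t) x)
    (hutc : Continuous fun p : ℝ × ℝ => ut p.1 p.2)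
    (huxxc : Continuous fun p : ℝ × ℝ => uxx p.1 p.2)
    (hheat : ∀ t > (0:ℝ), ∀ x ∈ Set.Ioo (0:ℝ) 1, ut x t = γ * uxx x t)
    (hneu : ∀ t > (0:ℝ), ux 1 t = 0)
    (N : ℕ) (t : ℝ) (ht : 0 < t) :
    (∫ x in (0:ℝ)..1, (ut x t) ^ 2) ≥
      γ ^ 2 * ∑ k ∈ Finset.range (N + 3),
        (2 * (k : ℝ) + 1) *
          (if k = 0 then -(ux 0 t)
           else if k = 1 then 2 * u 0 t - 2 * u 1 t + ux 0 t
           else (∑ j ∈ Finset.Ico 1 k, ∑ i ∈ Finset.range j,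
                  ell k j * ell j i * ∫ x in (0:ℝ)..1, u x t * shiftedLegendre i x)
                + u 0 t * (∑ j ∈ Finset.range k, ell k j * (-1 : ℝ) ^ j)
                - u 1 t * (∑ j ∈ Finset.range k, ell k j)
                - (-1 : ℝ) ^ k * ux 0 t) ^ 2 := by
  have hslice : ∀ w : ℝ → ℝ → ℝ, (Continuous fun p : ℝ × ℝ => w p.1 p.2) → Continuous (w · t) :=
    fun w hw => hw.comp (continuous_id.prodMk continuous_const)
  have hcoeff : ∀ k, ∫ x in (0 : ℝ)..1, ut x t * (legendrePoly k).eval x =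
      γ * legendreMoment (u · t) (ux 0 t) k := by
    intro k
    rw [intervalIntegral.integral_congr_Ioo_of_le
        (g := fun x => γ * (uxx x t * (legendrePoly k).eval x)) zero_le_one
        fun x hx => by simp only [hheat t ht x hx, mul_assoc],
      intervalIntegral.integral_const_mul,
      integral_second_deriv_mul_legendrePoly (fun x _ => hux x t) (fun x _ => huxx x t)
        ((hslice uxx huxxc).intervalIntegrable 0 1) (hneu t ht)]
  have hbessel := sum_sq_integral_mul_legendrePoly_le (hslice ut hutc) (N + 3)
  simp only [hcoeff, mul_pow, mul_left_comm _ (γ ^ 2), ← mul_sum] at hbessel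
  exact hbessel

/-- Bessel bound for the time derivative in projected coordinates:
for a solution of the heat equation `∂ₜu = γ∂ₓₓu` on `(0,1)` with `∂ₓu(1,t) = 0`, every
`N ∈ ℕ` and `t > 0`, `∫₀¹ (∂ₜu)² ≥ γ² Σ_{k=0}^{N+2} (2k+1) m_k(t)²` with `m_0 = −∂ₓu(0,t)`,
`m_1 = 2u(0,t) − 2u(1,t) + ∂ₓu(0,t)` and, for `k ≥ 2`,
`m_k = Σ_{j=1}^{k−1}Σ_{i=0}^{j−1} ℓ_{kj}ℓ_{ji}⟨u(·,t),L_i⟩ + u(0,t)Σ_{j<k}ℓ_{kj}(−1)^j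
  − u(1,t)Σ_{j<k}ℓ_{kj} − (−1)^k ∂ₓu(0,t)`. -/
theorem bessel_time_derivative (γ : ℝ) (hγ : 0 < γ)
    (u ut ux uxx : ℝ → ℝ → ℝ)
    (hut : ∀ x t, HasDerivAt (fun s => u x s) (ut x t) t)
    (hux : ∀ x t, HasDerivAt (fun y => u y t) (ux x t) x)
    (huxx : ∀ x t, HasDerivAt (fun y => ux y t) (uxx x t) x)
    (hutc : Continuous fun p : ℝ × ℝ => ut p.1 p.2)
    (huxc : Continuous fun p : ℝ × ℝ => ux p.1 p.2)
    (huxxc : Continuous fun p : ℝ × ℝ => uxx p.1 p.2)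
    (hheat : ∀ t > (0:ℝ), ∀ x ∈ Set.Ioo (0:ℝ) 1, ut x t = γ * uxx x t)
    (hneu : ∀ t > (0:ℝ), ux 1 t = 0)
    (N : ℕ) (t : ℝ) (ht : 0 < t) :
    (∫ x in (0:ℝ)..1, (ut x t) ^ 2) ≥
      γ ^ 2 * ∑ k ∈ Finset.range (N + 3),
        (2 * (k : ℝ) + 1) *
          (if k = 0 then -(ux 0 t)
           else if k = 1 then 2 * u 0 t - 2 * u 1 t + ux 0 t
           else (∑ j ∈ Finset.Ico 1 k, ∑ i ∈ Finset.range j,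
                  ell k j * ell j i * ∫ x in (0:ℝ)..1, u x t * shiftedLegendre i x)
                + u 0 t * (∑ j ∈ Finset.range k, ell k j * (-1 : ℝ) ^ j)
                - u 1 t * (∑ j ∈ Finset.range k, ell k j)
                - (-1 : ℝ) ^ k * ux 0 t) ^ 2 :=
  bessel_time_derivative_general γ u ut ux uxx hux huxx hutc huxxc hheat hneu N t ht
end
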